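/- Every automorphism of the graph P (Petersen graph realized on 3-element subsets) is induced by a unique permutation of {1,2,3,4,5}; that is, the natural group homomorphism from S₅ to the automorphism group of P given by σ ↦ (A ↦ σ(A)) is surjective (and hence, combined with injectivity, an isomorphism). -/

import Mathlib

/-- The Petersen graph, realized on the 3-element subsets of a 5-element set:
two such subsets are adjacent when their intersection has exactly one element. -/
def Petersen : SimpleGraph {A : Finset (Fin 5) // A.card = 3} where
  Adj A B := ((A : Finset (Fin 5)) ∩ B).card = 1
  symm := by
    constructor
    intro A B h
    rwa [Finset.inter_comm]
  loopless := by
    constructor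
    rintro ⟨A, hA⟩ h
    simp only [Finset.inter_self] at h
    omega

/-! The independent 4-sets of the Petersen graph are exactly the five sets `avoiding i` of
triples missing a point `i`. An automorphism permutes them, and the induced permutation of the
points induces the automorphism, because a triple consists of the points `i` for which it is
not in `avoiding i`. -/

theorem SimpleGraph.Iso.isNIndepSet_map {α β : Type*} {G : SimpleGraph α} {H : SimpleGraph β}
    (f : G ≃g H) {n : ℕ} {s : Finset α} (hs : G.IsNIndepSet n s) :
    H.IsNIndepSet n (s.map f.toEquiv.toEmbedding) := by
  refine ⟨?_, by simp [hs.card_eq]⟩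
  rintro _ hx _ hy hne hadj
  simp only [Finset.coe_map, Set.mem_image, Finset.mem_coe] at hx hy
  obtain ⟨x, hx, rfl⟩ := hx
  obtain ⟨y, hy, rfl⟩ := hy
  exact hs.isIndepSet hx hy (ne_of_apply_ne f hne) (f.map_adj_iff.1 hadj)

theorem Finset.eq_image_equiv_iff {α β : Type*} [DecidableEq β] (σ : α ≃ β) (s : Finset α)
    (t : Finset β) : t = s.image σ ↔ ∀ x, σ x ∈ t ↔ x ∈ s := by
  rw [Finset.ext_iff, σ.symm.forall_congr_left]
  simp [σ.injective.mem_finset_image]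

namespace Petersen

abbrev Triple := {A : Finset (Fin 5) // A.card = 3}

instance : DecidableRel Petersen.Adj := fun _ _ => inferInstanceAs (Decidable (_ = 1))

def avoiding (i : Fin 5) : Finset Triple := {A | i ∉ A.1}

@[simp]
theorem mem_avoiding {i : Fin 5} {A : Triple} : A ∈ avoiding i ↔ i ∉ A.1 := by
  simp [avoiding]

theorem avoiding_injective : Function.Injective avoiding := by decide

theorem isNIndepSet_four_iff (s : Finset Triple) :
    Petersen.IsNIndepSet 4 s ↔ ∃ i, avoiding i = s := by
  revert s
  decide +kernel

theorem exists_map_avoiding_eq (f : Petersen ≃g Petersen) (i : Fin 5) :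
    ∃ j, (avoiding i).map f.toEquiv.toEmbedding = avoiding j :=
  ((isNIndepSet_four_iff _).1 (f.isNIndepSet_map ((isNIndepSet_four_iff _).2 ⟨i, rfl⟩))).imp
    fun _ h => h.symm

theorem exists_perm_mem_iff (f : Petersen ≃g Petersen) :
    ∃ σ : Equiv.Perm (Fin 5), ∀ (A : Triple) i, σ i ∈ (f A).1 ↔ i ∈ A.1 := by
  choose g hg using exists_map_avoiding_eq f
  have hg_inj : Function.Injective g := fun i j hij =>
    avoiding_injective (Finset.map_injective _ ((hg i).trans (hij ▸ (hg j).symm)))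
  refine ⟨Equiv.ofBijective g hg_inj.bijective_of_finite, fun A i => ?_⟩
  have key : f A ∈ avoiding (g i) ↔ A ∈ avoiding i := hg i ▸ Finset.mem_map' _
  simpa [not_iff_not] using key

theorem perm_eq_of_mem_iff (f : Petersen ≃g Petersen) {σ τ : Equiv.Perm (Fin 5)}
    (hσ : ∀ (A : Triple) i, σ i ∈ (f A).1 ↔ i ∈ A.1)
    (hτ : ∀ (A : Triple) i, τ i ∈ (f A).1 ↔ i ∈ A.1) : σ = τ :=
  Equiv.ext fun i => avoiding_injective <| Finset.ext fun B => by
    obtain ⟨A, rfl⟩ := f.surjective B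
    simp [hσ, hτ]

end Petersen

/-- Every automorphism of the Petersen graph is induced by a unique permutation of
{1,…,5}; equivalently, any group homomorphism S₅ → Aut(P) acting by σ ↦ (A ↦ σ(A))
is surjective. -/
theorem petersen_aut_induced_by_unique_perm :
    (∀ f : Petersen ≃g Petersen, ∃! σ : Equiv.Perm (Fin 5),
      ∀ A : {A : Finset (Fin 5) // A.card = 3},
        (f A : Finset (Fin 5)) = (A : Finset (Fin 5)).image σ) ∧
    (∀ φ : Equiv.Perm (Fin 5) →* (Petersen ≃g Petersen),
      (∀ (σ : Equiv.Perm (Fin 5)) (A : {A : Finset (Fin 5) // A.card = 3}),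
        ((φ σ) A : Finset (Fin 5)) = (A : Finset (Fin 5)).image σ) →
      Function.Surjective φ) := by
  have induced (f : Petersen ≃g Petersen) :
      ∃! σ : Equiv.Perm (Fin 5), ∀ A : Petersen.Triple, (f A).1 = A.1.image σ := by
    simp only [Finset.eq_image_equiv_iff]
    obtain ⟨σ, hσ⟩ := Petersen.exists_perm_mem_iff f
    exact ⟨σ, hσ, fun τ hτ => Petersen.perm_eq_of_mem_iff f hτ hσ⟩
  refine ⟨induced, fun φ hφ f => ?_⟩
  obtain ⟨σ, hσ, -⟩ := induced f
  exact ⟨σ, RelIso.ext fun A => Subtype.ext ((hφ σ A).trans (hσ A).symm)⟩
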